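/- Let E₀(v) be a finite nonempty set, D^e > 0 and δ_in^e real numbers, μ ∈ ℝ, and define δ_out^e = -μ δ_in^e + μ ω_v ∑_g (D^g)² δ_in^g with ω_v = 2/(∑_f (D^f)²). Then ∑_{e ∈ E₀(v)} (D^e)² |δ_out^e|² = μ² ∑_{e ∈ E₀(v)} (D^e)² |δ_in^e|². -/

import Mathlib

/-!
With weights `w = D²`, the map `x ↦ x - ω ⟨x, 1⟩_w • 1`, `ω = 2 / ⟨1, 1⟩_w`, is the reflection
in the hyperplane `w`-orthogonal to the constant vector, hence an isometry of the weighted norm;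
`δout` is `-μ` times this reflection of `δin`.
-/

open Finset

theorem sum_mul_sq_sub_mul_sum_mul {ι R : Type*} [CommRing R] (s : Finset ι) (w x : ι → R)
    {ω : R} (hω : ω ^ 2 * ∑ e ∈ s, w e = 2 * ω) :
    ∑ e ∈ s, w e * (x e - ω * ∑ g ∈ s, w g * x g) ^ 2 = ∑ e ∈ s, w e * x e ^ 2 := by
  set T := ∑ g ∈ s, w g * x g
  calc ∑ e ∈ s, w e * (x e - ω * T) ^ 2
      = ∑ e ∈ s, (w e * x e ^ 2 - 2 * (ω * T) * (w e * x e) + (ω * T) ^ 2 * w e) :=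
        sum_congr rfl fun _ _ => by ring
    _ = ∑ e ∈ s, w e * x e ^ 2 + T ^ 2 * (ω ^ 2 * ∑ e ∈ s, w e - 2 * ω) := by
        rw [sum_add_distrib, sum_sub_distrib, ← mul_sum, ← mul_sum]
        ring
    _ = ∑ e ∈ s, w e * x e ^ 2 := by rw [hω, sub_self, mul_zero, add_zero]

-- Also true for `b = 0`, where both sides are `0`.
theorem div_sq_mul_self {K : Type*} [Field K] (a b : K) : (a / b) ^ 2 * b = a * (a / b) := by
  rcases eq_or_ne b 0 with rfl | hb
  · simp
  · field_simp

theorem stmt5_general {ι : Type*} (E : Finset ι)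
    (D δin δout : ι → ℝ) (μ : ℝ)
    (ω : ℝ) (hω : ω = 2 / ∑ f ∈ E, (D f) ^ 2)
    (hδout : ∀ e ∈ E, δout e = - μ * δin e + μ * ω * ∑ g ∈ E, (D g) ^ 2 * δin g) :
    ∑ e ∈ E, (D e) ^ 2 * |δout e| ^ 2 = μ ^ 2 * ∑ e ∈ E, (D e) ^ 2 * |δin e| ^ 2 := by
  have hω' : ω ^ 2 * ∑ f ∈ E, D f ^ 2 = 2 * ω := by rw [hω]; exact div_sq_mul_self _ _
  simp only [sq_abs]
  calc ∑ e ∈ E, D e ^ 2 * δout e ^ 2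
      = μ ^ 2 * ∑ e ∈ E, D e ^ 2 * (δin e - ω * ∑ g ∈ E, D g ^ 2 * δin g) ^ 2 := by
        rw [mul_sum]
        exact sum_congr rfl fun e he => by rw [hδout e he]; ring
    _ = μ ^ 2 * ∑ e ∈ E, D e ^ 2 * δin e ^ 2 := by
        rw [sum_mul_sq_sub_mul_sum_mul E (fun e => D e ^ 2) δin hω']

/-- Energy identity at a node for the observer error system:
∑ (D^e)² |δ_out^e|² = μ² ∑ (D^e)² |δ_in^e|². -/
theorem stmt5 {ι : Type*} [DecidableEq ι] (E : Finset ι) (hE : E.Nonempty)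
    (D δin δout : ι → ℝ) (hD : ∀ e ∈ E, 0 < D e) (μ : ℝ)
    (ω : ℝ) (hω : ω = 2 / ∑ f ∈ E, (D f) ^ 2)
    (hδout : ∀ e ∈ E, δout e = - μ * δin e + μ * ω * ∑ g ∈ E, (D g) ^ 2 * δin g) :
    ∑ e ∈ E, (D e) ^ 2 * |δout e| ^ 2 = μ ^ 2 * ∑ e ∈ E, (D e) ^ 2 * |δin e| ^ 2 :=
  stmt5_general E D δin δout μ ω hω hδout
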